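/- arXiv:1912.09830 — 6 statements merged into one kernel-verified Lean document; each statement's English description precedes it below -/
import Mathlib

section
/- Let F_q be a finite field and α ∈ F_q. For a nonzero f ∈ F_q(x), define ord_α f := rootMultiplicity(α, num f) − rootMultiplicity(α, denom f) ∈ ℤ. Let f₁, f₂ be nonzero elements of F_q(x) with f₁ ≠ f₂, and suppose ev f₁ α = ev f₂ α. Then ord_α(f₁ − f₂) ≥ min(ord_α f₁, 0) + min(ord_α f₂, 0) + 1. -/
open Polynomial

/-- Evaluation of a rational function at the rational places of `Fq(x)`,
with values in `Fq ∪ {∞}` encoded as `Option Fq` (`none` = `∞`). -/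
noncomputable def ev {Fq : Type*} [Field Fq] [DecidableEq Fq]
    (f : RatFunc Fq) : Option Fq → Option Fq
  | some α =>
      if f.denom.eval α ≠ 0 then some (f.num.eval α / f.denom.eval α) else none
  | none =>
      if f.num.degree = f.denom.degree then
        some (f.num.leadingCoeff / f.denom.leadingCoeff)
      else if f.num.degree < f.denom.degree then some (0 : Fq) else none

/-- The order of vanishing of a nonzero rational function at the finite rational
place `P_α`. -/
noncomputable def ordAt {Fq : Type*} [Field Fq] (α : Fq) (f : RatFunc Fq) : ℤ :=
  (f.num.rootMultiplicity α : ℤ) - (f.denom.rootMultiplicity α : ℤ)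

/-!
Write `fᵢ = nᵢ / dᵢ` in lowest terms, so that `f₁ - f₂ = N / (d₁ d₂)` with
`N = n₁ d₂ - n₂ d₁`. By coprimality `min (ord_α fᵢ) 0 = -mult_α dᵢ`, so the claim is
`mult_α N ≥ 1`, i.e. `N(α) = 0`. Equal values at `α` give exactly this: either both `dᵢ`
vanish at `α`, or `n₁(α)/d₁(α) = n₂(α)/d₂(α)`.
-/

namespace RatFunc

variable {K : Type*} [Field K]

theorem ordAt_algebraMap_div_algebraMap (α : K) {p q : K[X]} (hp : p ≠ 0) (hq : q ≠ 0) :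
    ordAt α (algebraMap K[X] (RatFunc K) p / algebraMap K[X] (RatFunc K) q) =
      (p.rootMultiplicity α : ℤ) - (q.rootMultiplicity α : ℤ) := by
  set f := algebraMap K[X] (RatFunc K) p / algebraMap K[X] (RatFunc K) q
  have hfpq : f.num * q = p * f.denom := (num_mul_eq_mul_denom_iff hq).mpr rfl
  have hf : f ≠ 0 := div_ne_zero (algebraMap_ne_zero hp) (algebraMap_ne_zero hq)
  have hmult := congrArg (rootMultiplicity α) hfpq
  rw [rootMultiplicity_mul (mul_ne_zero (num_ne_zero hf) hq),
    rootMultiplicity_mul (mul_ne_zero hp (denom_ne_zero f))] at hmult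
  unfold ordAt
  omega

theorem min_ordAt_zero (α : K) (f : RatFunc K) :
    min (ordAt α f) 0 = -(f.denom.rootMultiplicity α : ℤ) := by
  by_cases hpole : f.denom.IsRoot α
  · have hcop := aeval_ne_zero_of_isCoprime (isCoprime_num_denom f) α
    simp only [coe_aeval_eq_eval] at hcop
    have hnum : f.num.rootMultiplicity α = 0 :=
      rootMultiplicity_eq_zero (hcop.resolve_right (not_not.mpr hpole))
    simp [ordAt, hnum]
  · simp [ordAt, rootMultiplicity_eq_zero hpole]

theorem sub_eq_algebraMap_div_algebraMap (f₁ f₂ : RatFunc K) :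
    f₁ - f₂ = algebraMap K[X] (RatFunc K) (f₁.num * f₂.denom - f₂.num * f₁.denom) /
      algebraMap K[X] (RatFunc K) (f₁.denom * f₂.denom) := by
  conv_lhs => rw [← num_div_denom f₁, ← num_div_denom f₂]
  rw [div_sub_div _ _ (algebraMap_ne_zero (denom_ne_zero f₁))
    (algebraMap_ne_zero (denom_ne_zero f₂))]
  simp only [map_sub, map_mul]
  ring

theorem eval_num_mul_denom_sub_eq_zero_of_ev_eq [DecidableEq K] {α : K} {f₁ f₂ : RatFunc K}
    (hev : ev f₁ (some α) = ev f₂ (some α)) :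
    (f₁.num * f₂.denom - f₂.num * f₁.denom).eval α = 0 := by
  simp only [ev, ne_eq, ite_not] at hev
  split_ifs at hev with h₁ h₂ h₂
  · simp [h₁, h₂]
  · rw [Option.some_inj, div_eq_div_iff h₁ h₂] at hev
    simp [hev]

end RatFunc

open RatFunc in
theorem ordAt_sub_ge_of_ev_eq_general
    {Fq : Type*} [Field Fq] [DecidableEq Fq] (α : Fq)
    (f₁ f₂ : RatFunc Fq) (hne : f₁ ≠ f₂)
    (hev : ev f₁ (some α) = ev f₂ (some α)) :
    ordAt α (f₁ - f₂) ≥ min (ordAt α f₁) 0 + min (ordAt α f₂) 0 + 1 := by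
  have hsub := sub_eq_algebraMap_div_algebraMap f₁ f₂
  set N := f₁.num * f₂.denom - f₂.num * f₁.denom
  have hd : f₁.denom * f₂.denom ≠ 0 := mul_ne_zero (denom_ne_zero f₁) (denom_ne_zero f₂)
  have hN : N ≠ 0 := by
    rintro hN
    apply sub_ne_zero.mpr hne
    rw [hsub, hN, map_zero, zero_div]
  have hNα : 1 ≤ N.rootMultiplicity α :=
    (rootMultiplicity_pos hN).mpr (eval_num_mul_denom_sub_eq_zero_of_ev_eq hev)
  rw [hsub, ordAt_algebraMap_div_algebraMap α hN hd,
    rootMultiplicity_mul hd, min_ordAt_zero, min_ordAt_zero]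
  omega

/-- If two distinct nonzero rational functions `f₁, f₂` take the same
value at the finite rational place `P_α`, then
`ord_α (f₁ - f₂) ≥ min (ord_α f₁) 0 + min (ord_α f₂) 0 + 1`; i.e.
`f₁ - f₂ ∈ L(G₁ + G₂ - P_α)` where `G_i` is the pole divisor of `f_i`. -/
theorem ordAt_sub_ge_of_ev_eq
    {Fq : Type*} [Field Fq] [Fintype Fq] [DecidableEq Fq] (α : Fq)
    (f₁ f₂ : RatFunc Fq) (hf₁ : f₁ ≠ 0) (hf₂ : f₂ ≠ 0) (hne : f₁ ≠ f₂)
    (hev : ev f₁ (some α) = ev f₂ (some α)) :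
    ordAt α (f₁ - f₂) ≥ min (ordAt α f₁) 0 + min (ordAt α f₂) 0 + 1 :=
  ordAt_sub_ge_of_ev_eq_general α f₁ f₂ hne hev
end

section
/- Let F_q be a finite field. For a nonzero f ∈ F_q(x), define ord_∞ f := deg(denom f) − deg(num f) ∈ ℤ (the negative of the integral degree of f). Let f₁, f₂ be nonzero elements of F_q(x) with f₁ ≠ f₂, and suppose ev f₁ ∞ = ev f₂ ∞. Then ord_∞(f₁ − f₂) ≥ min(ord_∞ f₁, 0) + min(ord_∞ f₂, 0) + 1. -/
open Polynomial

/-- The order of vanishing of a nonzero rational function at the infinite place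
`P_∞`, namely `deg(denom f) - deg(num f) = -intDegree f`. -/
noncomputable def ordInf {Fq : Type*} [Field Fq] (f : RatFunc Fq) : ℤ :=
  -(f.intDegree)

/-! The value of `f` at `P_∞` is `∞`, `0`, or the nonzero leading coefficient of `num f`
according as `intDegree f` is positive, negative or zero (`denom f` is monic). Equal values
therefore force `f₁, f₂` either to both have a pole at `P_∞`, where the ultrametric bound
`intDegree (f₁ - f₂) ≤ max (intDegree f₁) (intDegree f₂)` suffices, or to both vanish there, or
to both have degree `0` and the same leading coefficient. In the last case the leading terms
cancel in `num f₁ * denom f₂ - denom f₁ * num f₂`, so `f₁ - f₂` vanishes at `P_∞`. -/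

namespace RatFunc

variable {K : Type*} [Field K]

theorem intDegree_sub_le {x y : RatFunc K} (hy : y ≠ 0) (hxy : x - y ≠ 0) :
    (x - y).intDegree ≤ max x.intDegree y.intDegree := by
  simpa [sub_eq_add_neg] using
    intDegree_add_le (neg_ne_zero.mpr hy) (by rwa [← sub_eq_add_neg])

theorem intDegree_algebraMap_div {p q : K[X]} (hp : p ≠ 0) (hq : q ≠ 0) :
    (algebraMap K[X] (RatFunc K) p / algebraMap K[X] (RatFunc K) q).intDegree =
      p.natDegree - q.natDegree := by
  rw [intDegree_div (algebraMap_ne_zero hp) (algebraMap_ne_zero hq), intDegree_polynomial,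
    intDegree_polynomial]

theorem sub_eq_algebraMap_div (x y : RatFunc K) :
    x - y = algebraMap K[X] (RatFunc K) (x.num * y.denom - x.denom * y.num) /
      algebraMap K[X] (RatFunc K) (x.denom * y.denom) := by
  conv_lhs => rw [← num_div_denom x, ← num_div_denom y]
  rw [div_sub_div _ _ (algebraMap_ne_zero x.denom_ne_zero) (algebraMap_ne_zero y.denom_ne_zero)]
  simp only [map_sub, map_mul]

theorem intDegree_sub_lt {x y : RatFunc K} (hx : x ≠ 0) (hy : y ≠ 0) (hxy : x ≠ y)
    (hd : x.intDegree = y.intDegree) (hlc : x.num.leadingCoeff = y.num.leadingCoeff) :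
    (x - y).intDegree < x.intDegree := by
  have hP : x.num * y.denom - x.denom * y.num ≠ 0 := by
    intro h
    apply sub_ne_zero.mpr hxy
    rw [sub_eq_algebraMap_div, h, map_zero, zero_div]
  have hdeg : (x.num * y.denom).degree = (x.denom * y.num).degree := by
    rw [degree_mul, degree_mul, degree_eq_natDegree (num_ne_zero hx),
      degree_eq_natDegree (num_ne_zero hy), degree_eq_natDegree x.denom_ne_zero,
      degree_eq_natDegree y.denom_ne_zero]
    unfold intDegree at hd
    norm_cast
    omega
  have hlt : (x.num * y.denom - x.denom * y.num).natDegree < (x.num * y.denom).natDegree :=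
    natDegree_lt_natDegree hP <| degree_sub_lt_left hdeg
      (mul_ne_zero (num_ne_zero hx) y.denom_ne_zero)
      (by simp [hlc, x.monic_denom.leadingCoeff, y.monic_denom.leadingCoeff])
  rw [sub_eq_algebraMap_div, intDegree_algebraMap_div hP
      (mul_ne_zero x.denom_ne_zero y.denom_ne_zero),
    ← natDegree_num_mul_right_sub_natDegree_denom_mul_left_eq_intDegree hx y.denom_ne_zero,
    mul_comm y.denom]
  omega

end RatFunc

section Evaluation

open RatFunc

variable {K : Type*} [Field K] [DecidableEq K]

theorem ev_none (f : RatFunc K) :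
    ev f none = if 0 < f.intDegree then none
      else if f.intDegree < 0 then some 0 else some f.num.leadingCoeff := by
  by_cases hf : f = 0
  · simp [hf, ev]
  rw [ev, degree_eq_natDegree (num_ne_zero hf), degree_eq_natDegree f.denom_ne_zero,
    f.monic_denom.leadingCoeff, div_one, intDegree]
  simp only [Nat.cast_inj, Nat.cast_lt]
  split_ifs <;> first | rfl | omega

theorem intDegree_cases_of_ev_none_eq {f g : RatFunc K} (hf : f ≠ 0) (hg : g ≠ 0)
    (h : ev f none = ev g none) :
    (0 < f.intDegree ∧ 0 < g.intDegree) ∨ (f.intDegree < 0 ∧ g.intDegree < 0) ∨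
      (f.intDegree = 0 ∧ g.intDegree = 0 ∧ f.num.leadingCoeff = g.num.leadingCoeff) := by
  have hf' : f.num.leadingCoeff ≠ 0 := leadingCoeff_ne_zero.mpr (num_ne_zero hf)
  have hg' : g.num.leadingCoeff ≠ 0 := leadingCoeff_ne_zero.mpr (num_ne_zero hg)
  rw [ev_none, ev_none] at h
  split_ifs at h <;> grind

end Evaluation

theorem ordInf_sub_ge_of_ev_eq_general
    {Fq : Type*} [Field Fq] [DecidableEq Fq]
    (f₁ f₂ : RatFunc Fq) (hf₁ : f₁ ≠ 0) (hf₂ : f₂ ≠ 0) (hne : f₁ ≠ f₂)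
    (hev : ev f₁ none = ev f₂ none) :
    ordInf (f₁ - f₂) ≥ min (ordInf f₁) 0 + min (ordInf f₂) 0 + 1 := by
  have hle := RatFunc.intDegree_sub_le hf₂ (sub_ne_zero.mpr hne)
  simp only [ordInf, ge_iff_le]
  rcases intDegree_cases_of_ev_none_eq hf₁ hf₂ hev with ⟨h₁, h₂⟩ | ⟨h₁, h₂⟩ | ⟨h₁, h₂, hlc⟩
  · omega
  · omega
  · have := RatFunc.intDegree_sub_lt hf₁ hf₂ hne (h₁.trans h₂.symm) hlc
    omega

/-- If two distinct nonzero rational functions `f₁, f₂` take the same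
value at the infinite place `P_∞`, then
`ord_∞ (f₁ - f₂) ≥ min (ord_∞ f₁) 0 + min (ord_∞ f₂) 0 + 1`; i.e.
`f₁ - f₂ ∈ L(G₁ + G₂ - P_∞)` where `G_i` is the pole divisor of `f_i`. -/
theorem ordInf_sub_ge_of_ev_eq
    {Fq : Type*} [Field Fq] [Fintype Fq] [DecidableEq Fq]
    (f₁ f₂ : RatFunc Fq) (hf₁ : f₁ ≠ 0) (hf₂ : f₂ ≠ 0) (hne : f₁ ≠ f₂)
    (hev : ev f₁ none = ev f₂ none) :
    ordInf (f₁ - f₂) ≥ min (ordInf f₁) 0 + min (ordInf f₂) 0 + 1 :=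
  ordInf_sub_ge_of_ev_eq_general f₁ f₂ hf₁ hf₂ hne hev
end

section
/- Let F_q be a finite field and m a positive integer. If f₁, f₂ ∈ F_q(x) are distinct, deg(num f_i) ≤ m and deg(denom f_i) ≤ m for i = 1, 2, then the number of elements α of F_q ∪ {∞} (encoded as Option F_q) with ev f₁ α = ev f₂ α is at most 2m. Equivalently, the Hamming distance between the words (ev f₁ α)_{α ∈ Option F_q} and (ev f₂ α)_{α ∈ Option F_q} of length q + 1 is at least q + 1 − 2m, where q = |F_q|. -/
open Polynomial

/-!
If `f` and `g` agree at a finite place `a`, then `a` is a root of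
`D = num f * denom g - num g * denom f`, a nonzero polynomial of degree at most `2m`.
If they also agree at `∞`, the coefficient of `X ^ (2m)` in `D` vanishes, so `D` has at most
`2m - 1` roots. Either way at most `2m` places agree.
-/

open Finset

theorem Finset.card_filter_option_univ {α : Type*} [Fintype α] (p : Option α → Prop)
    [DecidablePred p] :
    #{o | p o} = #{a | p (some a)} + if p none then 1 else 0 := by
  simp only [card_filter, Fintype.sum_option]
  split_ifs <;> ring

theorem hammingDist_add_card_filter_eq {ι : Type*} [Fintype ι] {β : ι → Type*}
    [∀ i, DecidableEq (β i)] (x y : ∀ i, β i) :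
    hammingDist x y + #{i | x i = y i} = Fintype.card ι := by
  rw [add_comm, hammingDist, card_filter_add_card_filter_not, card_univ]

namespace RatFunc

variable {K : Type*} [Field K]

/-- The numerator of `f - g`, before cancellation. -/
noncomputable def crossDet (f g : RatFunc K) : K[X] := f.num * g.denom - g.num * f.denom

theorem crossDet_ne_zero {f g : RatFunc K} (h : f ≠ g) : crossDet f g ≠ 0 := fun h0 ↦ h <| by
  rwa [crossDet, sub_eq_zero, num_mul_eq_mul_denom_iff (denom_ne_zero g), num_div_denom] at h0

theorem natDegree_crossDet_le {f g : RatFunc K} {m : ℕ}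
    (hf : f.num.natDegree ≤ m) (hf' : f.denom.natDegree ≤ m)
    (hg : g.num.natDegree ≤ m) (hg' : g.denom.natDegree ≤ m) :
    (crossDet f g).natDegree ≤ m + m :=
  (natDegree_sub_le _ _).trans <| max_le
    (natDegree_mul_le.trans (add_le_add hf hg')) (natDegree_mul_le.trans (add_le_add hg hf'))

theorem coeff_crossDet_add_self {f g : RatFunc K} {m : ℕ}
    (hf : f.num.natDegree ≤ m) (hf' : f.denom.natDegree ≤ m)
    (hg : g.num.natDegree ≤ m) (hg' : g.denom.natDegree ≤ m) :
    (crossDet f g).coeff (m + m) =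
      f.num.coeff m * g.denom.coeff m - g.num.coeff m * f.denom.coeff m := by
  rw [crossDet, coeff_sub, coeff_mul_add_eq_of_natDegree_le hf hg',
    coeff_mul_add_eq_of_natDegree_le hg hf']

variable [DecidableEq K]

theorem eval_crossDet_eq_zero_of_ev_eq {f g : RatFunc K} {a : K}
    (h : ev f (some a) = ev g (some a)) : (crossDet f g).eval a = 0 := by
  simp only [ev] at h
  by_cases hf : f.denom.eval a = 0 <;> by_cases hg : g.denom.eval a = 0
  all_goals simp only [hf, hg, ne_eq, not_true, not_false_eq_true, if_true, if_false,
    reduceCtorEq, Option.some.injEq] at h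
  · simp [crossDet, hf, hg]
  · rw [div_eq_div_iff hf hg] at h
    simp [crossDet, h]

theorem ev_none_eq_none_iff {f : RatFunc K} :
    ev f none = none ↔ f.denom.degree < f.num.degree := by
  simp only [ev]
  split_ifs with h₁ h₂ <;> simp only [false_iff, not_lt, true_iff]
  · exact h₁.le
  · exact h₂.le
  · exact lt_of_le_of_ne (not_lt.mp h₂) (Ne.symm h₁)

theorem ev_none_of_natDegree_denom_eq {f : RatFunc K} {m : ℕ}
    (hf : f.num.natDegree ≤ m) (hf' : f.denom.natDegree = m) :
    ev f none = some (f.num.coeff m) := by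
  have hdeg : f.denom.degree = m := by rw [degree_eq_natDegree (denom_ne_zero f), hf']
  simp only [ev, (monic_denom f).leadingCoeff, div_one, hdeg]
  split_ifs with h₁ h₂
  · rw [leadingCoeff, natDegree_eq_of_degree_eq_some h₁]
  · rw [coeff_eq_zero_of_degree_lt h₂]
  · exact absurd ((degree_le_of_natDegree_le hf).lt_of_ne h₁) h₂

theorem coeff_num_eq_zero_of_ev_none_ne_none {f : RatFunc K} {m : ℕ}
    (hden : f.denom.natDegree < m) (h : ev f none ≠ none) : f.num.coeff m = 0 := by
  rw [ne_eq, ev_none_eq_none_iff, not_lt] at h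
  exact coeff_eq_zero_of_degree_lt
    (h.trans_lt ((natDegree_lt_iff_degree_lt (denom_ne_zero f)).mp hden))

theorem coeff_crossDet_add_self_eq_zero_of_ev_none_eq {f g : RatFunc K} {m : ℕ}
    (hf : f.num.natDegree ≤ m) (hf' : f.denom.natDegree ≤ m)
    (hg : g.num.natDegree ≤ m) (hg' : g.denom.natDegree ≤ m)
    (h : ev f none = ev g none) : (crossDet f g).coeff (m + m) = 0 := by
  rw [coeff_crossDet_add_self hf hf' hg hg']
  rcases hf'.eq_or_lt with hf' | hf' <;> rcases hg'.eq_or_lt with hg' | hg'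
  · rw [ev_none_of_natDegree_denom_eq hf hf', ev_none_of_natDegree_denom_eq hg hg',
      Option.some.injEq] at h
    have hf1 : f.denom.coeff m = 1 := hf' ▸ (monic_denom f).coeff_natDegree
    have hg1 : g.denom.coeff m = 1 := hg' ▸ (monic_denom g).coeff_natDegree
    rw [h, hf1, hg1, sub_self]
  · have hg0 : g.num.coeff m = 0 := coeff_num_eq_zero_of_ev_none_ne_none hg'
      (by simp [← h, ev_none_of_natDegree_denom_eq hf hf'])
    simp [hg0, coeff_eq_zero_of_natDegree_lt hg']
  · have hf0 : f.num.coeff m = 0 := coeff_num_eq_zero_of_ev_none_ne_none hf'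
      (by simp [h, ev_none_of_natDegree_denom_eq hg hg'])
    simp [hf0, coeff_eq_zero_of_natDegree_lt hf']
  · simp [coeff_eq_zero_of_natDegree_lt hf', coeff_eq_zero_of_natDegree_lt hg']

variable [Fintype K]

theorem card_filter_ev_eq_le {f g : RatFunc K} (hfg : f ≠ g) {m : ℕ}
    (hf : f.num.natDegree ≤ m) (hf' : f.denom.natDegree ≤ m)
    (hg : g.num.natDegree ≤ m) (hg' : g.denom.natDegree ≤ m) :
    #{α | ev f α = ev g α} ≤ m + m := by
  have hD := crossDet_ne_zero hfg
  have hle := natDegree_crossDet_le hf hf' hg hg'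
  have hroots : #{a | ev f (some a) = ev g (some a)} ≤ (crossDet f g).natDegree :=
    card_le_degree_of_subset_roots fun a ha ↦ by
      rw [mem_val, mem_filter] at ha
      exact (mem_roots hD).mpr (eval_crossDet_eq_zero_of_ev_eq ha.2)
  rw [card_filter_option_univ]
  split_ifs with hinf
  · have hlt : (crossDet f g).natDegree < m + m := hle.lt_of_ne fun hdeg ↦
      hD <| leadingCoeff_eq_zero.mp <| by
        rw [leadingCoeff, hdeg, coeff_crossDet_add_self_eq_zero_of_ev_none_eq hf hf' hg hg' hinf]
    omega
  · omega

end RatFunc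

theorem agreement_le_and_hammingDist_ge_general
    {Fq : Type*} [Field Fq] [Fintype Fq] [DecidableEq Fq] (m : ℕ)
    (f₁ f₂ : RatFunc Fq) (hne : f₁ ≠ f₂)
    (hnum₁ : f₁.num.degree ≤ (m : WithBot ℕ)) (hden₁ : f₁.denom.degree ≤ (m : WithBot ℕ))
    (hnum₂ : f₂.num.degree ≤ (m : WithBot ℕ)) (hden₂ : f₂.denom.degree ≤ (m : WithBot ℕ)) :
    (Finset.univ.filter fun α : Option Fq => ev f₁ α = ev f₂ α).card ≤ 2 * m ∧
      hammingDist (fun α : Option Fq => ev f₁ α) (fun α : Option Fq => ev f₂ α) ≥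
        Fintype.card Fq + 1 - 2 * m := by
  have hagree := RatFunc.card_filter_ev_eq_le hne (natDegree_le_iff_degree_le.mpr hnum₁)
    (natDegree_le_iff_degree_le.mpr hden₁) (natDegree_le_iff_degree_le.mpr hnum₂)
    (natDegree_le_iff_degree_le.mpr hden₂)
  have hsplit := hammingDist_add_card_filter_eq (fun α ↦ ev f₁ α) (fun α ↦ ev f₂ α)
  rw [Fintype.card_option] at hsplit
  omega

/-- If `f₁ ≠ f₂` are rational functions whose numerators and
denominators in lowest terms have degree at most `m`, then their evaluation words
agree in at most `2m` of the `q + 1` coordinates; equivalently, the Hamming distance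
between the two words of length `q + 1` is at least `q + 1 - 2m`. -/
theorem agreement_le_and_hammingDist_ge
    {Fq : Type*} [Field Fq] [Fintype Fq] [DecidableEq Fq] (m : ℕ) (hm : 0 < m)
    (f₁ f₂ : RatFunc Fq) (hne : f₁ ≠ f₂)
    (hnum₁ : f₁.num.degree ≤ (m : WithBot ℕ)) (hden₁ : f₁.denom.degree ≤ (m : WithBot ℕ))
    (hnum₂ : f₂.num.degree ≤ (m : WithBot ℕ)) (hden₂ : f₂.denom.degree ≤ (m : WithBot ℕ)) :
    (Finset.univ.filter fun α : Option Fq => ev f₁ α = ev f₂ α).card ≤ 2 * m ∧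
      hammingDist (fun α : Option Fq => ev f₁ α) (fun α : Option Fq => ev f₂ α) ≥
        Fintype.card Fq + 1 - 2 * m :=
  agreement_le_and_hammingDist_ge_general m f₁ f₂ hne hnum₁ hden₁ hnum₂ hden₂
end

section
/- Let F_q be a finite field with q elements and m a positive integer with 2m ≤ q. Then the map f ↦ (ev f α)_{α ∈ Option F_q} is injective on L_m := {f ∈ F_q(x) : deg(num f) ≤ m and deg(denom f) ≤ m}, and for every f ∈ L_m the word (ev f α)_{α ∈ Option F_q} differs from the constant-∞ word in at least q + 1 − m coordinates. -/
/-!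
Both kinds of evaluation read off a point of the projective line from the degree-`m` binary forms
homogenizing `num f` and `denom f`: at `α` it is `[num f (α) : denom f (α)]`, at `∞` it is the
pair of their `x^m`-coefficients, unless both vanish. If `f, g ∈ L_m = heightLE F_q m` give the
same word, the cross polynomial `num f * denom g - num g * denom f` has degree at most `2m`,
vanishes at every `α ∈ F_q`, and (from the value at `∞`) has zero `x^(2m)`-coefficient, so it has
degree `< 2m ≤ q` and `q` roots, hence is `0`. The coordinates equal to `∞` are the zeros on the
projective line of the degree-`m` form homogenizing `denom f`, and there are at most `m` of them.
-/

open Polynomial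

open Finset

lemma hammingDist_add_card_eq_card {ι β : Type*} [Fintype ι] [DecidableEq β] (x : ι → β)
    (c : β) :
    hammingDist x (fun _ => c) + #{i | x i = c} = Fintype.card ι := by
  rw [hammingDist, add_comm, card_filter_add_card_filter_not, card_univ]

namespace Polynomial

variable {R : Type*} [Semiring R] {p : R[X]} {n : ℕ}

lemma degree_lt_of_natDegree_le_of_coeff_eq_zero (hp : p.natDegree ≤ n) (h0 : p.coeff n = 0) :
    p.degree < n :=
  (degree_lt_iff_coeff_zero p n).2 fun _ hk =>
    hk.eq_or_lt.elim (· ▸ h0) fun hlt => coeff_eq_zero_of_natDegree_lt (hp.trans_lt hlt)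

lemma degree_eq_of_natDegree_le_of_coeff_ne_zero (hp : p.natDegree ≤ n) (h0 : p.coeff n ≠ 0) :
    p.degree = n :=
  degree_eq_of_le_of_coeff_ne_zero (natDegree_le_iff_degree_le.mp hp) h0

lemma leadingCoeff_eq_coeff_of_natDegree_le (hp : p.natDegree ≤ n) (h0 : p.coeff n ≠ 0) :
    p.leadingCoeff = p.coeff n := by
  rw [leadingCoeff, natDegree_eq_of_le_of_coeff_ne_zero hp h0]

/-- The left side counts the zeros on the projective line of the degree-`n` form homogenizing `p`;
`∞` is one of them exactly when `p.coeff n = 0`. -/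
lemma card_roots_add_ite_coeff_eq_zero_le {F : Type*} [Field F] [Fintype F] [DecidableEq F]
    {p : F[X]} (hp0 : p ≠ 0) (hp : p.natDegree ≤ n) :
    #{a | p.eval a = 0} + (if p.coeff n = 0 then 1 else 0) ≤ n := by
  have hroots : #{a | p.eval a = 0} ≤ p.natDegree :=
    card_le_degree_of_subset_roots fun a ha => by simpa [mem_roots hp0] using ha
  split_ifs with hn
  · have : p.natDegree ≠ n := fun h => leadingCoeff_ne_zero.mpr hp0 (by rwa [leadingCoeff, h])
    omega
  · omega

end Polynomial

section ProjPoint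

variable {F : Type*} [Field F] [DecidableEq F]

/-- The point `[a : b]` of the projective line, with `none` as `∞`; the pair `(0, 0)` also goes
to `∞`. -/
def projPoint (a b : F) : Option F := if b ≠ 0 then some (a / b) else none

lemma projPoint_eq_none_iff {a b : F} : projPoint a b = none ↔ b = 0 := by
  unfold projPoint; split_ifs with hb <;> simp_all

lemma mul_eq_mul_of_projPoint_eq {a b c d : F} (h : projPoint a b = projPoint c d) :
    a * d = c * b := by
  unfold projPoint at h
  split_ifs at h with hb hd hd
  · exact (div_eq_div_iff hb hd).mp (Option.some.inj h)
  · simp_all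

end ProjPoint

def heightLE (F : Type*) [Field F] (m : ℕ) : Set (RatFunc F) :=
  {f | f.num.degree ≤ m ∧ f.denom.degree ≤ m}

section Eval

variable {F : Type*} [Field F] [DecidableEq F] {m : ℕ}

lemma ev_some (f : RatFunc F) (α : F) :
    ev f (some α) = projPoint (f.num.eval α) (f.denom.eval α) := rfl

lemma ev_none_eq_projPoint {f : RatFunc F} (hf : f ∈ heightLE F m)
    (h : f.num.coeff m ≠ 0 ∨ f.denom.coeff m ≠ 0) :
    ev f none = projPoint (f.num.coeff m) (f.denom.coeff m) := by
  have hn := natDegree_le_of_degree_le hf.1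
  have hd := natDegree_le_of_degree_le hf.2
  by_cases hdm : f.denom.coeff m = 0
  · have hnm : f.num.coeff m ≠ 0 := h.resolve_right (not_not.mpr hdm)
    have hlt := degree_lt_of_natDegree_le_of_coeff_eq_zero hd hdm
    simp [ev, projPoint, hdm, degree_eq_of_natDegree_le_of_coeff_ne_zero hn hnm, hlt.ne',
      hlt.not_gt]
  by_cases hnm : f.num.coeff m = 0
  · have hlt := degree_lt_of_natDegree_le_of_coeff_eq_zero hn hnm
    simp [ev, projPoint, hdm, hnm, degree_eq_of_natDegree_le_of_coeff_ne_zero hd hdm, hlt.ne, hlt]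
  · simp [ev, projPoint, hdm, degree_eq_of_natDegree_le_of_coeff_ne_zero hn hnm,
      degree_eq_of_natDegree_le_of_coeff_ne_zero hd hdm,
      leadingCoeff_eq_coeff_of_natDegree_le hn hnm, leadingCoeff_eq_coeff_of_natDegree_le hd hdm]

lemma coeff_mul_eq_of_ev_none_eq {f g : RatFunc F} (hf : f ∈ heightLE F m)
    (hg : g ∈ heightLE F m) (h : ev f none = ev g none) :
    f.num.coeff m * g.denom.coeff m = g.num.coeff m * f.denom.coeff m := by
  by_cases hf0 : f.num.coeff m = 0 ∧ f.denom.coeff m = 0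
  · simp [hf0.1, hf0.2]
  by_cases hg0 : g.num.coeff m = 0 ∧ g.denom.coeff m = 0
  · simp [hg0.1, hg0.2]
  rw [ev_none_eq_projPoint hf (not_and_or.mp hf0), ev_none_eq_projPoint hg (not_and_or.mp hg0)] at h
  exact mul_eq_mul_of_projPoint_eq h

lemma eq_of_ev_eq [Fintype F] {f g : RatFunc F} (hf : f ∈ heightLE F m) (hg : g ∈ heightLE F m)
    (hq : 2 * m ≤ Fintype.card F) (h : ev f = ev g) : f = g := by
  have hfn := natDegree_le_of_degree_le hf.1
  have hfd := natDegree_le_of_degree_le hf.2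
  have hgn := natDegree_le_of_degree_le hg.1
  have hgd := natDegree_le_of_degree_le hg.2
  set H := f.num * g.denom - g.num * f.denom
  have hH_eval (α : F) : H.eval α = 0 := by
    simpa [H, sub_eq_zero] using mul_eq_mul_of_projPoint_eq (congrFun h (some α))
  have hH_natDegree : H.natDegree ≤ m + m :=
    (natDegree_sub_le _ _).trans <|
      max_le (natDegree_mul_le_of_le hfn hgd) (natDegree_mul_le_of_le hgn hfd)
  have hH_coeff : H.coeff (m + m) = 0 := by
    rw [coeff_sub, coeff_mul_add_eq_of_natDegree_le hfn hgd,
      coeff_mul_add_eq_of_natDegree_le hgn hfd, coeff_mul_eq_of_ev_none_eq hf hg (congrFun h none),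
      sub_self]
  have hH : H = 0 := by
    refine eq_zero_of_degree_lt_of_eval_finset_eq_zero univ ?_ fun α _ => hH_eval α
    refine (degree_lt_of_natDegree_le_of_coeff_eq_zero hH_natDegree hH_coeff).trans_le ?_
    rw [card_univ, ← two_mul]
    exact_mod_cast hq
  rw [sub_eq_zero, RatFunc.num_mul_eq_mul_denom_iff g.denom_ne_zero] at hH
  rw [hH, RatFunc.num_div_denom]

lemma card_ev_eq_none_le [Fintype F] {f : RatFunc F} (hf : f ∈ heightLE F m) :
    #{x | ev f x = none} ≤ m := by
  have h_inf : ev f none = none → f.denom.coeff m = 0 := by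
    contrapose
    intro hd
    rw [ev_none_eq_projPoint hf (Or.inr hd)]
    exact mt projPoint_eq_none_iff.mp hd
  rw [card_filter, Fintype.sum_option]
  simp only [ev_some, projPoint_eq_none_iff]
  rw [← card_filter, add_comm]
  refine le_trans ?_ (card_roots_add_ite_coeff_eq_zero_le f.denom_ne_zero
    (natDegree_le_of_degree_le hf.2))
  gcongr
  split_ifs <;> simp_all

end Eval

theorem evalMap_injOn_and_dist_to_infty_general
    {Fq : Type*} [Field Fq] [Fintype Fq] [DecidableEq Fq] (m : ℕ)
    (hq : 2 * m ≤ Fintype.card Fq) :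
    Set.InjOn (fun f : RatFunc Fq => (fun α : Option Fq => ev f α))
      {f : RatFunc Fq | f.num.degree ≤ (m : WithBot ℕ) ∧ f.denom.degree ≤ (m : WithBot ℕ)} ∧
    ∀ f : RatFunc Fq, f.num.degree ≤ (m : WithBot ℕ) → f.denom.degree ≤ (m : WithBot ℕ) →
      hammingDist (fun α : Option Fq => ev f α) (fun _ : Option Fq => (none : Option Fq)) ≥
        Fintype.card Fq + 1 - m := by
  refine ⟨fun f hf g hg h => eq_of_ev_eq hf hg hq h, fun f hfn hfd => ?_⟩
  change hammingDist (ev f) _ ≥ _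
  have h_split := hammingDist_add_card_eq_card (ev f) none
  have h_poles := card_ev_eq_none_le (m := m) ⟨hfn, hfd⟩
  rw [Fintype.card_option] at h_split
  omega

/-- For `0 < m` and `2m ≤ q`, the evaluation map `f ↦ (ev f α)_α`
is injective on `L_m = {f : deg(num f) ≤ m, deg(denom f) ≤ m}`, and the evaluation
word of each `f ∈ L_m` differs from the constant-`∞` word in at least `q + 1 - m`
coordinates. -/
theorem evalMap_injOn_and_dist_to_infty
    {Fq : Type*} [Field Fq] [Fintype Fq] [DecidableEq Fq] (m : ℕ) (hm : 0 < m)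
    (hq : 2 * m ≤ Fintype.card Fq) :
    Set.InjOn (fun f : RatFunc Fq => (fun α : Option Fq => ev f α))
      {f : RatFunc Fq | f.num.degree ≤ (m : WithBot ℕ) ∧ f.denom.degree ≤ (m : WithBot ℕ)} ∧
    ∀ f : RatFunc Fq, f.num.degree ≤ (m : WithBot ℕ) → f.denom.degree ≤ (m : WithBot ℕ) →
      hammingDist (fun α : Option Fq => ev f α) (fun _ : Option Fq => (none : Option Fq)) ≥
        Fintype.card Fq + 1 - m :=
  evalMap_injOn_and_dist_to_infty_general m hq
end

section
/- For all integers q ≥ 2 and m ≥ 1 with 2m ≤ q, one has q^{2m+1} + q^{2m} − 2q^m + 2 > (q+1)^{2m}. -/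
/-!
Since `(1 + 1/q)^(2m) ≤ exp (2m/q) ≤ e < 3`, the power `(q+1)^(2m)` is less than `3 q^(2m)`.
For `q ≥ 3` the left-hand side is at least `3 q^(2m) + (q^m - 1)^2 + 1`; the remaining case
`q = 2` forces `m ≤ 1` and is checked directly.
-/

open Real

lemma one_add_inv_pow_le_exp_one {q : ℝ} (hq : 0 < q) {n : ℕ} (hn : (n : ℝ) ≤ q) :
    (1 + q⁻¹) ^ n ≤ exp 1 :=
  calc (1 + q⁻¹) ^ n ≤ exp q⁻¹ ^ n := by
        gcongr
        linarith [add_one_le_exp q⁻¹]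
    _ = exp (n / q) := by rw [← exp_nat_mul, div_eq_mul_inv]
    _ ≤ exp 1 := exp_le_exp.2 (div_le_one_of_le₀ hn hq.le)

lemma add_one_pow_lt_three_mul_pow {q : ℝ} (hq : 0 < q) {n : ℕ} (hn : (n : ℝ) ≤ q) :
    (q + 1) ^ n < 3 * q ^ n :=
  calc (q + 1) ^ n = q ^ n * (1 + q⁻¹) ^ n := by
        rw [← mul_pow, mul_add, mul_inv_cancel₀ hq.ne', mul_one]
    _ ≤ q ^ n * exp 1 := by gcongr; exact one_add_inv_pow_le_exp_one hq hn
    _ < q ^ n * 3 := by gcongr; linarith [exp_one_lt_d9]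
    _ = 3 * q ^ n := mul_comm _ _

theorem size_gt_singleton_threshold_general (q : ℤ) (m : ℕ) (hq : 2 ≤ q)
    (h : 2 * (m : ℤ) ≤ q) :
    q ^ (2 * m + 1) + q ^ (2 * m) - 2 * q ^ m + 2 > (q + 1) ^ (2 * m) := by
  rcases hq.eq_or_lt with rfl | hq3
  · have hm : m ≤ 1 := by omega
    interval_cases m <;> norm_num
  · have hlt : (q + 1) ^ (2 * m) < 3 * q ^ (2 * m) := by
      have := add_one_pow_lt_three_mul_pow (q := (q : ℝ)) (by positivity) (n := 2 * m)
        (by exact_mod_cast h)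
      exact_mod_cast this
    have hle : 3 * q ^ (2 * m) ≤ q ^ (2 * m + 1) + q ^ (2 * m) - 2 * q ^ m + 2 := by
      rw [pow_succ, pow_mul']
      nlinarith [sq_nonneg (q ^ m - 1), sq_nonneg (q ^ m)]
    linarith

/-- For all integers `q ≥ 2` and `m ≥ 1` with `2m ≤ q`, one has
`q^(2m+1) + q^(2m) - 2*q^m + 2 > (q+1)^(2m)`. -/
theorem size_gt_singleton_threshold (q : ℤ) (m : ℕ) (hq : 2 ≤ q) (hm : 1 ≤ m)
    (h : 2 * (m : ℤ) ≤ q) :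
    q ^ (2 * m + 1) + q ^ (2 * m) - 2 * q ^ m + 2 > (q + 1) ^ (2 * m) :=
  size_gt_singleton_threshold_general q m hq h
end

section
/- For every fixed positive integer m there exists Q such that for all integers q ≥ Q (in particular q ≥ 2m), one has (q+2)^{q−2m} · (q^{2m+1} + q^{2m} − 2q^m + 2) > (q+1)^{q+1}; equivalently, q^{2m+1} + q^{2m} − 2q^m + 2 > (q+1)^{q+1} / (q+2)^{q−2m} for all sufficiently large q. -/
/-
Write `n = q - 2m`, so that `q + 1 = n + (2m + 1)`, and bound the code size from below by
`q^(2m+1)`. Two Bernoulli-type estimates compare the remaining powers: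
`((q+2)/(q+1))^n ≥ 1 + n/(q+1)` and `((q+1)/q)^(2m+2) ≤ 1 + (4m+4)/q` (the latter for `4m+2 ≤ q`).
Hence `(q+1)^(q+1) / ((q+2)^n q^(2m+1)) ≤ (q+4m+4) / (q+1+n)`, which is `< 1` as soon as
`n = q - 2m` exceeds `4m+3`, i.e. for `q ≥ 6m+4`.
-/

lemma pow_mul_add_le_succ_pow_mul (a n : ℕ) : a ^ n * (a + n) ≤ (a + 1) ^ n * a := by
  induction n with
  | zero => simp
  | succ n ih =>
    calc a ^ (n + 1) * (a + (n + 1))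
        = a * (a ^ n * (a + n)) + a ^ n * a := by ring
      _ ≤ a * ((a + 1) ^ n * a) + (a + 1) ^ n * a := by
          gcongr
          exact Nat.le_succ a
      _ = (a + 1) ^ (n + 1) * a := by ring

lemma succ_pow_mul_le_pow_mul_add (q k : ℕ) (hk : 2 * k ≤ q + 2) :
    (q + 1) ^ k * q ≤ q ^ k * (q + 2 * k) := by
  induction k with
  | zero => simp
  | succ k ih =>
    calc (q + 1) ^ (k + 1) * q = (q + 1) ^ k * q * (q + 1) := by ring
      _ ≤ q ^ k * (q + 2 * k) * (q + 1) := Nat.mul_le_mul_right _ (ih (by omega))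
      _ ≤ q ^ k * (q * (q + 2 * (k + 1))) := by
          rw [mul_assoc]
          exact Nat.mul_le_mul_left _ (by nlinarith)
      _ = q ^ (k + 1) * (q + 2 * (k + 1)) := by ring

lemma succ_pow_add_lt_add_two_pow_mul_pow (q n k : ℕ) (hq : 0 < q) (hk : 2 * k ≤ q)
    (hn : 2 * k + 1 < n) : (q + 1) ^ (n + k) < (q + 2) ^ n * q ^ k := by
  refine Nat.lt_of_mul_lt_mul_right (a := (q + 1) * q) ?_
  have hpos : 0 < (q + 1) ^ n * q ^ (k + 1) := by positivity
  calc (q + 1) ^ (n + k) * ((q + 1) * q) = (q + 1) ^ n * ((q + 1) ^ (k + 1) * q) := by ring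
    _ ≤ (q + 1) ^ n * (q ^ (k + 1) * (q + 2 * (k + 1))) :=
        Nat.mul_le_mul_left _ (succ_pow_mul_le_pow_mul_add q (k + 1) (by omega))
    _ = (q + 1) ^ n * q ^ (k + 1) * (q + 2 * (k + 1)) := by ring
    _ < (q + 1) ^ n * q ^ (k + 1) * (q + 1 + n) := Nat.mul_lt_mul_of_pos_left (by omega) hpos
    _ = (q + 1) ^ n * (q + 1 + n) * q ^ (k + 1) := by ring
    _ ≤ (q + 2) ^ n * (q + 1) * q ^ (k + 1) :=
        Nat.mul_le_mul_right _ (pow_mul_add_le_succ_pow_mul (q + 1) n)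
    _ = (q + 2) ^ n * q ^ k * ((q + 1) * q) := by ring

lemma pow_le_code_size (q m : ℕ) :
    q ^ (2 * m + 1) ≤ q ^ (2 * m + 1) + q ^ (2 * m) - 2 * q ^ m + 2 := by
  have hsq : 2 * q ^ m ≤ q ^ (2 * m) + 2 := by
    rw [pow_mul']
    nlinarith [sq_nonneg ((q : ℤ) ^ m - 1)]
  omega

theorem eventually_size_gt_xing_bound_general (m : ℕ) :
    ∃ Q : ℕ, 2 * m ≤ Q ∧ ∀ q : ℕ, Q ≤ q →
      (q + 2) ^ (q - 2 * m) * (q ^ (2 * m + 1) + q ^ (2 * m) - 2 * q ^ m + 2) >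
        (q + 1) ^ (q + 1) := by
  refine ⟨6 * m + 4, by omega, fun q hq => ?_⟩
  have hexp : q + 1 = (q - 2 * m) + (2 * m + 1) := by omega
  calc (q + 1) ^ (q + 1) = (q + 1) ^ ((q - 2 * m) + (2 * m + 1)) := by rw [← hexp]
    _ < (q + 2) ^ (q - 2 * m) * q ^ (2 * m + 1) :=
        succ_pow_add_lt_add_two_pow_mul_pow q _ _ (by omega) (by omega) (by omega)
    _ ≤ _ := Nat.mul_le_mul_left _ (pow_le_code_size q m)

/-- For every fixed positive integer `m`, for all sufficiently large
integers `q` (in particular `q ≥ 2m`), one has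
`(q+2)^(q-2m) * (q^(2m+1) + q^(2m) - 2*q^m + 2) > (q+1)^(q+1)`, i.e. the size of the
code `C_m` exceeds the guarantee `(q+1)^(q+1) / (q+2)^(q-2m)` of Xing's construction. -/
theorem eventually_size_gt_xing_bound (m : ℕ) (hm : 0 < m) :
    ∃ Q : ℕ, 2 * m ≤ Q ∧ ∀ q : ℕ, Q ≤ q →
      (q + 2) ^ (q - 2 * m) * (q ^ (2 * m + 1) + q ^ (2 * m) - 2 * q ^ m + 2) >
        (q + 1) ^ (q + 1) :=
  eventually_size_gt_xing_bound_general m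
end
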